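/- Let p < 1/6, let m ≥ 1 and let x be a nonzero integer with P(X_m = x) > 0. For the elephant random walk, conditionally on {X_m = x}, the hitting time τ_0 = inf{n ≥ m : X_n = 0} of the origin is almost surely finite; in particular the ERW is positive recurrent. -/

import Mathlib

/-!
Conditionally on the past, the step `η (n + 1)` has mean `(2p - 1) X n / n`, which points towards
the origin as soon as `p ≤ 1/2`. Hence `|X (m + n)|`, stopped at its first zero, is a nonnegative
supermartingale and converges almost surely. Away from the origin `|X|` moves by exactly `1` at
every step, so a path that never returns to `0` cannot converge. An event of full probability
keeps full probability under conditioning on `{X m = x}`.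
-/

open MeasureTheory Filter

/-- The natural filtration generated by the steps `η 1, …, η n`. -/
noncomputable def erwFil {Ω : Type*} (η : ℕ → Ω → ℝ) (n : ℕ) : MeasurableSpace Ω :=
  ⨆ k ∈ Finset.Icc 1 n, MeasurableSpace.comap (η k) Real.measurableSpace

/-- The position of the elephant random walk after `n` steps. -/
noncomputable def erwX {Ω : Type*} (η : ℕ → Ω → ℝ) (n : ℕ) (ω : Ω) : ℝ :=
  ∑ k ∈ Finset.Icc 1 n, η k ω

/-- `η` is an elephant random walk with memory parameter `p` and
first-step parameter `r` on the probability space `(Ω, μ)`. -/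
structure IsERW {Ω : Type*} [MeasurableSpace Ω] (μ : Measure Ω) (p r : ℝ)
    (η : ℕ → Ω → ℝ) : Prop where
  prob : IsProbabilityMeasure μ
  p_mem : p ∈ Set.Icc (0 : ℝ) 1
  r_mem : r ∈ Set.Icc (0 : ℝ) 1
  meas : ∀ k, Measurable (η k)
  pm : ∀ k, 1 ≤ k → ∀ ω, η k ω = 1 ∨ η k ω = -1
  first : μ {ω | η 1 ω = 1} = ENNReal.ofReal r
  cond : ∀ n, 1 ≤ n →
    μ[η (n + 1)|erwFil η n] =ᵐ[μ] fun ω => (2 * p - 1) * erwX η n ω / n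

open scoped Topology

lemma Real.sign_mul_self (x : ℝ) : Real.sign x * x = |x| := by
  rcases lt_trichotomy x 0 with hx | rfl | hx
  · rw [Real.sign_of_neg hx, abs_of_neg hx]; ring
  · simp
  · rw [Real.sign_of_pos hx, abs_of_pos hx]; ring

lemma Real.abs_sign_of_ne_zero {x : ℝ} (hx : x ≠ 0) : |Real.sign x| = 1 := by
  rcases Real.sign_apply_eq_of_ne_zero x hx with h | h <;> simp [h]

lemma Real.measurable_sign : Measurable Real.sign :=
  Measurable.ite measurableSet_Iio measurable_const
    (Measurable.ite measurableSet_Ioi measurable_const measurable_const)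

lemma abs_add_eq_abs_add_sign_mul {x e : ℝ} (hx : 1 ≤ |x|) (he : |e| ≤ 1) :
    |x + e| = |x| + Real.sign x * e := by
  rw [abs_le] at he
  rcases le_or_gt 0 x with hx0 | hx0
  · rw [abs_of_nonneg hx0] at hx ⊢
    rw [Real.sign_of_pos (by linarith), abs_of_nonneg (by linarith)]; ring
  · rw [abs_of_neg hx0] at hx ⊢
    rw [Real.sign_of_neg hx0, abs_of_nonpos (by linarith)]; ring

lemma not_cauchySeq_of_le_dist_succ {X : Type*} [PseudoMetricSpace X] {u : ℕ → X} {ε : ℝ}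
    (hε : 0 < ε) (hu : ∀ n, ε ≤ dist (u (n + 1)) (u n)) : ¬ CauchySeq u := by
  intro hcauchy
  obtain ⟨N, hN⟩ := Metric.cauchySeq_iff.1 hcauchy ε hε
  exact (hu N).not_gt (hN (N + 1) (Nat.le_succ N) N le_rfl)

theorem MeasureTheory.Supermartingale.exists_ae_tendsto_of_nonneg {Ω : Type*}
    [MeasurableSpace Ω] {μ : Measure Ω} [IsFiniteMeasure μ] {ℱ : Filtration ℕ ‹_›}
    {f : ℕ → Ω → ℝ} (hf : Supermartingale f ℱ μ) (hnonneg : ∀ n ω, 0 ≤ f n ω) :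
    ∀ᵐ ω ∂μ, ∃ c, Tendsto (fun n => f n ω) atTop (𝓝 c) := by
  have hbdd : ∀ n, eLpNorm (-f n) 1 μ ≤ (∫ ω, f 0 ω ∂μ).toNNReal := by
    intro n
    rw [eLpNorm_neg, eLpNorm_one_eq_lintegral_enorm,
      ← ofReal_integral_norm_eq_lintegral_enorm (hf.integrable n)]
    refine ENNReal.ofReal_le_ofReal ?_
    calc ∫ ω, ‖f n ω‖ ∂μ = ∫ ω, f n ω ∂μ := by
          simp_rw [Real.norm_of_nonneg (hnonneg n _)]
      _ ≤ ∫ ω, f 0 ω ∂μ := by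
          simpa using hf.setIntegral_le (Nat.zero_le n) MeasurableSet.univ
  filter_upwards [hf.neg.exists_ae_tendsto_of_bdd hbdd] with ω ⟨c, hc⟩
  exact ⟨-c, by simpa using hc.neg⟩

section Walk

variable {Ω : Type*} {η : ℕ → Ω → ℝ}

lemma erwX_zero (ω : Ω) : erwX η 0 ω = 0 := by
  simp [erwX]

lemma erwX_succ (n : ℕ) (ω : Ω) : erwX η (n + 1) ω = erwX η n ω + η (n + 1) ω := by
  simp [erwX, Finset.sum_Icc_succ_top (Nat.le_add_left 1 n)]

lemma abs_eta_eq_one (hpm : ∀ k, 1 ≤ k → ∀ ω, η k ω = 1 ∨ η k ω = -1) {k : ℕ} (hk : 1 ≤ k)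
    (ω : Ω) : |η k ω| = 1 := by
  rcases hpm k hk ω with he | he <;> simp [he]

lemma abs_erwX_le (hpm : ∀ k, 1 ≤ k → ∀ ω, η k ω = 1 ∨ η k ω = -1) (n : ℕ) (ω : Ω) :
    |erwX η n ω| ≤ n := by
  calc |erwX η n ω| ≤ ∑ k ∈ Finset.Icc 1 n, |η k ω| := Finset.abs_sum_le_sum_abs _ _
    _ = ∑ k ∈ Finset.Icc 1 n, (1 : ℝ) :=
        Finset.sum_congr rfl fun k hk => abs_eta_eq_one hpm (Finset.mem_Icc.1 hk).1 ω
    _ = n := by simp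

lemma exists_intCast_eq_erwX (hpm : ∀ k, 1 ≤ k → ∀ ω, η k ω = 1 ∨ η k ω = -1) (n : ℕ)
    (ω : Ω) : ∃ z : ℤ, erwX η n ω = z := by
  induction n with
  | zero => exact ⟨0, by simp [erwX_zero]⟩
  | succ n ih =>
    obtain ⟨z, hz⟩ := ih
    rcases hpm (n + 1) (Nat.le_add_left 1 n) ω with he | he
    · exact ⟨z + 1, by rw [erwX_succ, hz, he]; push_cast; ring⟩
    · exact ⟨z - 1, by rw [erwX_succ, hz, he]; push_cast; ring⟩

lemma one_le_abs_erwX (hpm : ∀ k, 1 ≤ k → ∀ ω, η k ω = 1 ∨ η k ω = -1) {n : ℕ} {ω : Ω}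
    (h0 : erwX η n ω ≠ 0) : 1 ≤ |erwX η n ω| := by
  obtain ⟨z, hz⟩ := exists_intCast_eq_erwX hpm n ω
  rw [hz] at h0 ⊢
  exact_mod_cast Int.one_le_abs (by exact_mod_cast h0)

lemma abs_erwX_succ (hpm : ∀ k, 1 ≤ k → ∀ ω, η k ω = 1 ∨ η k ω = -1) {n : ℕ} {ω : Ω}
    (h0 : erwX η n ω ≠ 0) :
    |erwX η (n + 1) ω| = |erwX η n ω| + Real.sign (erwX η n ω) * η (n + 1) ω := by
  rw [erwX_succ]
  exact abs_add_eq_abs_add_sign_mul (one_le_abs_erwX hpm h0)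
    (abs_eta_eq_one hpm (Nat.le_add_left 1 n) ω).le

lemma abs_sub_abs_erwX_succ (hpm : ∀ k, 1 ≤ k → ∀ ω, η k ω = 1 ∨ η k ω = -1) {n : ℕ}
    {ω : Ω} (h0 : erwX η n ω ≠ 0) : |(|erwX η (n + 1) ω| - |erwX η n ω|)| = 1 := by
  rw [abs_erwX_succ hpm h0, add_sub_cancel_left, abs_mul, Real.abs_sign_of_ne_zero h0,
    abs_eta_eq_one hpm (Nat.le_add_left 1 n) ω, one_mul]

end Walk

section Filtration

variable {Ω : Type*} {η : ℕ → Ω → ℝ}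

lemma erwFil_mono {n n' : ℕ} (hnn : n ≤ n') : erwFil η n ≤ erwFil η n' :=
  iSup₂_le fun k hk => le_iSup₂ (f := fun k (_ : k ∈ Finset.Icc 1 n') =>
    MeasurableSpace.comap (η k) Real.measurableSpace) k
    (Finset.mem_Icc.2 ⟨(Finset.mem_Icc.1 hk).1, (Finset.mem_Icc.1 hk).2.trans hnn⟩)

lemma erwFil_le [MeasurableSpace Ω] (hη : ∀ k, Measurable (η k)) (n : ℕ) :
    erwFil η n ≤ ‹MeasurableSpace Ω› :=
  iSup₂_le fun k _ => (hη k).comap_le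

lemma measurable_eta_erwFil {k n : ℕ} (hk : k ∈ Finset.Icc 1 n) : Measurable[erwFil η n] (η k) :=
  measurable_iff_comap_le.2 (le_iSup₂ (f := fun k (_ : k ∈ Finset.Icc 1 n) =>
    MeasurableSpace.comap (η k) Real.measurableSpace) k hk)

lemma measurable_erwX_erwFil (n : ℕ) : Measurable[erwFil η n] (erwX η n) :=
  Finset.measurable_sum _ fun _ hk => measurable_eta_erwFil hk

noncomputable def erwFiltration [MeasurableSpace Ω] (hη : ∀ k, Measurable (η k)) (m : ℕ) :
    Filtration ℕ ‹MeasurableSpace Ω› where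
  seq n := erwFil η (m + n)
  mono' _ _ hij := erwFil_mono (Nat.add_le_add_left hij m)
  le' n := erwFil_le hη (m + n)

end Filtration

section Stopped

variable {Ω : Type*} {η : ℕ → Ω → ℝ}

/-- `|X (m + n)|`, frozen at `0` from the first time `≥ m` at which the walk is at the origin. -/
noncomputable def erwStoppedAbs (η : ℕ → Ω → ℝ) (m : ℕ) : ℕ → Ω → ℝ
  | 0 => fun ω => |erwX η m ω|
  | n + 1 => fun ω => if erwStoppedAbs η m n ω = 0 then 0 else |erwX η (m + (n + 1)) ω|

lemma erwStoppedAbs_nonneg (m n : ℕ) (ω : Ω) : 0 ≤ erwStoppedAbs η m n ω := by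
  cases n with
  | zero => exact abs_nonneg _
  | succ n => unfold erwStoppedAbs; split_ifs <;> simp

lemma erwStoppedAbs_eq_of_ne_zero {m n : ℕ} {ω : Ω} (h : erwStoppedAbs η m n ω ≠ 0) :
    erwStoppedAbs η m n ω = |erwX η (m + n) ω| := by
  cases n with
  | zero => rfl
  | succ n =>
    unfold erwStoppedAbs at h ⊢
    split_ifs at h ⊢
    · exact absurd rfl h
    · rfl

lemma erwStoppedAbs_eq_of_forall_ne_zero {m : ℕ} {ω : Ω}
    (hne : ∀ k, m ≤ k → erwX η k ω ≠ 0) (n : ℕ) :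
    erwStoppedAbs η m n ω = |erwX η (m + n) ω| := by
  induction n with
  | zero => rfl
  | succ n ih =>
    have h0 : erwStoppedAbs η m n ω ≠ 0 := by
      simpa [ih] using hne (m + n) (Nat.le_add_right m n)
    simp [erwStoppedAbs, h0]

lemma erwStoppedAbs_le (hpm : ∀ k, 1 ≤ k → ∀ ω, η k ω = 1 ∨ η k ω = -1) (m n : ℕ) (ω : Ω) :
    erwStoppedAbs η m n ω ≤ m + n := by
  by_cases h : erwStoppedAbs η m n ω = 0
  · rw [h]; positivity
  · rw [erwStoppedAbs_eq_of_ne_zero h]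
    exact_mod_cast abs_erwX_le hpm (m + n) ω

lemma measurable_erwStoppedAbs (m n : ℕ) : Measurable[erwFil η (m + n)] (erwStoppedAbs η m n) := by
  induction n with
  | zero => exact measurable_abs.comp (measurable_erwX_erwFil m)
  | succ n ih =>
    let _ : MeasurableSpace Ω := erwFil η (m + (n + 1))
    have hzero : MeasurableSet {ω | erwStoppedAbs η m n ω = 0} :=
      ih.mono (erwFil_mono (Nat.le_succ _)) le_rfl (measurableSet_singleton 0)
    exact Measurable.ite hzero measurable_const (measurable_erwX_erwFil _).abs

noncomputable def erwStopDir (η : ℕ → Ω → ℝ) (m n : ℕ) (ω : Ω) : ℝ :=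
  if erwStoppedAbs η m n ω = 0 then 0 else Real.sign (erwX η (m + n) ω)

lemma abs_erwStopDir_le (m n : ℕ) (ω : Ω) : |erwStopDir η m n ω| ≤ 1 := by
  unfold erwStopDir
  split_ifs
  · simp
  · rcases Real.sign_apply_eq (erwX η (m + n) ω) with h | h | h <;> simp [h]

lemma erwStopDir_mul_erwX (m n : ℕ) (ω : Ω) :
    erwStopDir η m n ω * erwX η (m + n) ω = erwStoppedAbs η m n ω := by
  unfold erwStopDir
  split_ifs with h
  · rw [h, zero_mul]
  · rw [Real.sign_mul_self, erwStoppedAbs_eq_of_ne_zero h]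

lemma measurable_erwStopDir (m n : ℕ) : Measurable[erwFil η (m + n)] (erwStopDir η m n) := by
  let _ : MeasurableSpace Ω := erwFil η (m + n)
  exact Measurable.ite (measurable_erwStoppedAbs m n (measurableSet_singleton 0))
    measurable_const (Real.measurable_sign.comp (measurable_erwX_erwFil _))

lemma erwStoppedAbs_succ (hpm : ∀ k, 1 ≤ k → ∀ ω, η k ω = 1 ∨ η k ω = -1) (m n : ℕ) (ω : Ω) :
    erwStoppedAbs η m (n + 1) ω =
      erwStoppedAbs η m n ω + erwStopDir η m n ω * η (m + n + 1) ω := by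
  by_cases h : erwStoppedAbs η m n ω = 0
  · simp [erwStoppedAbs, erwStopDir, h]
  · have hX : erwX η (m + n) ω ≠ 0 := fun hX => h (by
      rw [erwStoppedAbs_eq_of_ne_zero h, hX, abs_zero])
    rw [show erwStoppedAbs η m (n + 1) ω = |erwX η (m + n + 1) ω| from if_neg h,
      erwStopDir, if_neg h, erwStoppedAbs_eq_of_ne_zero h]
    exact abs_erwX_succ hpm hX

end Stopped

section ERW

variable {Ω : Type*} [MeasurableSpace Ω] {μ : Measure Ω} {p r : ℝ} {η : ℕ → Ω → ℝ}

lemma IsERW.condExp_mul_eta_succ (h : IsERW μ p r η) {N : ℕ} (hN : 1 ≤ N) {c : Ω → ℝ}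
    (hc : StronglyMeasurable[erwFil η N] c) (hci : Integrable (c * η (N + 1)) μ) :
    μ[c * η (N + 1)|erwFil η N] =ᵐ[μ] fun ω => c ω * ((2 * p - 1) * erwX η N ω / N) := by
  have := h.prob
  have hη : Integrable (η (N + 1)) μ :=
    Integrable.of_bound (h.meas _).aestronglyMeasurable 1 (ae_of_all _ fun ω => by
      rw [Real.norm_eq_abs, abs_eta_eq_one h.pm (Nat.le_add_left 1 N)])
  filter_upwards [condExp_mul_of_stronglyMeasurable_left hc hci hη, h.cond N hN] with ω h1 h2
  rw [h1, Pi.mul_apply, h2]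

lemma IsERW.integrable_erwStoppedAbs (h : IsERW μ p r η) (m n : ℕ) :
    Integrable (erwStoppedAbs η m n) μ := by
  have := h.prob
  refine Integrable.of_bound ?_ (m + n) (ae_of_all _ fun ω => ?_)
  · exact ((measurable_erwStoppedAbs m n).mono (erwFil_le h.meas _) le_rfl).aestronglyMeasurable
  · rw [Real.norm_of_nonneg (erwStoppedAbs_nonneg m n ω)]
    exact erwStoppedAbs_le h.pm m n ω

lemma IsERW.condExp_erwStoppedAbs_succ_le (h : IsERW μ p r η) (hp : p ≤ 1 / 2) {m : ℕ}
    (hm : 1 ≤ m) (n : ℕ) :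
    μ[erwStoppedAbs η m (n + 1)|erwFil η (m + n)] ≤ᵐ[μ] erwStoppedAbs η m n := by
  have := h.prob
  set N := m + n
  have hG : StronglyMeasurable[erwFil η N] (erwStoppedAbs η m n) :=
    (measurable_erwStoppedAbs m n).stronglyMeasurable
  have hdir : StronglyMeasurable[erwFil η N] (erwStopDir η m n) :=
    (measurable_erwStopDir m n).stronglyMeasurable
  have hdirη : Integrable (erwStopDir η m n * η (N + 1)) μ := by
    refine Integrable.of_bound ?_ 1 (ae_of_all _ fun ω => ?_)
    · exact ((measurable_erwStopDir m n).mono (erwFil_le h.meas _) le_rfl).mul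
        (h.meas _) |>.aestronglyMeasurable
    · rw [Pi.mul_apply, Real.norm_eq_abs, abs_mul, abs_eta_eq_one h.pm (Nat.le_add_left 1 N),
        mul_one]
      exact abs_erwStopDir_le m n ω
  have hsplit : erwStoppedAbs η m (n + 1) = erwStoppedAbs η m n + erwStopDir η m n * η (N + 1) :=
    funext (erwStoppedAbs_succ h.pm m n)
  rw [hsplit]
  filter_upwards [condExp_add (h.integrable_erwStoppedAbs m n) hdirη _,
    h.condExp_mul_eta_succ (hm.trans (Nat.le_add_right m n)) hdir hdirη] with ω hadd hmul
  rw [hadd, Pi.add_apply, hmul,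
    condExp_of_stronglyMeasurable (erwFil_le h.meas N) hG (h.integrable_erwStoppedAbs m n)]
  have hdrift : erwStopDir η m n ω * ((2 * p - 1) * erwX η N ω / N) =
      (2 * p - 1) * erwStoppedAbs η m n ω / N := by
    rw [← erwStopDir_mul_erwX]; ring
  have hdrift_nonpos : (2 * p - 1) * erwStoppedAbs η m n ω / N ≤ 0 :=
    div_nonpos_of_nonpos_of_nonneg
      (mul_nonpos_of_nonpos_of_nonneg (by linarith) (erwStoppedAbs_nonneg m n ω)) N.cast_nonneg
  linarith

lemma IsERW.supermartingale_erwStoppedAbs (h : IsERW μ p r η) (hp : p ≤ 1 / 2) {m : ℕ}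
    (hm : 1 ≤ m) : Supermartingale (erwStoppedAbs η m) (erwFiltration h.meas m) μ := by
  have := h.prob
  exact supermartingale_nat (fun n => (measurable_erwStoppedAbs m n).stronglyMeasurable)
    (h.integrable_erwStoppedAbs m) (h.condExp_erwStoppedAbs_succ_le hp hm)

lemma IsERW.ae_exists_erwX_eq_zero (h : IsERW μ p r η) (hp : p ≤ 1 / 2) (m : ℕ) :
    ∀ᵐ ω ∂μ, ∃ n, m ≤ n ∧ erwX η n ω = 0 := by
  rcases Nat.eq_zero_or_pos m with rfl | hm
  · exact ae_of_all _ fun ω => ⟨0, le_rfl, erwX_zero ω⟩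
  have := h.prob
  filter_upwards [(h.supermartingale_erwStoppedAbs hp hm).exists_ae_tendsto_of_nonneg
    (erwStoppedAbs_nonneg m)] with ω ⟨c, hc⟩
  by_contra! hne
  refine not_cauchySeq_of_le_dist_succ one_pos (fun n => ?_) hc.cauchySeq
  rw [Real.dist_eq, erwStoppedAbs_eq_of_forall_ne_zero hne,
    erwStoppedAbs_eq_of_forall_ne_zero hne]
  exact (abs_sub_abs_erwX_succ h.pm (hne _ (Nat.le_add_right m n))).ge

end ERW

open ProbabilityTheory in
theorem erw_positive_recurrent_general
    {Ω : Type*} [MeasurableSpace Ω] {μ : Measure Ω} {p r : ℝ} {η : ℕ → Ω → ℝ}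
    (h : IsERW μ p r η) (hp : p < 1 / 6) (m : ℕ)
    (x : ℤ) :
    ∀ᵐ ω ∂(μ[|{ω | erwX η m ω = (x : ℝ)}]), ∃ n : ℕ, m ≤ n ∧ erwX η n ω = 0 :=
  cond_absolutelyContinuous.ae_le (h.ae_exists_erwX_eq_zero (by linarith) m)

open ProbabilityTheory in
/-- For the ERW with `p < 1/6`, conditionally on `{X m = x}` with `x ≠ 0` and
`P(X m = x) > 0`, the hitting time `τ₀ = inf {n ≥ m : X n = 0}` of the origin is
almost surely finite: the elephant random walk is positive recurrent. -/
theorem erw_positive_recurrent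
    {Ω : Type*} [MeasurableSpace Ω] {μ : Measure Ω} {p r : ℝ} {η : ℕ → Ω → ℝ}
    (h : IsERW μ p r η) (hp : p < 1 / 6) (m : ℕ) (hm : 1 ≤ m)
    (x : ℤ) (hx : x ≠ 0) (hpos : μ {ω | erwX η m ω = (x : ℝ)} ≠ 0) :
    ∀ᵐ ω ∂(μ[|{ω | erwX η m ω = (x : ℝ)}]), ∃ n : ℕ, m ≤ n ∧ erwX η n ω = 0 :=
  erw_positive_recurrent_general h hp m x
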